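/- arXiv:2102.05910 — 3 statements merged into one kernel-verified Lean document; each statement's English description precedes it below -/
import Mathlib

section
/- Let θ ≥ 0, α_f ≥ 1/2, α₂ ≥ α_f, γ₂ = 1/2 - α_f + α₂, and θ₂ = (α₂ + α_f γ₂ θ)⁻¹. Then -1 ≤ (α₂ + (α_f - 1)γ₂θ)·θ₂ ≤ 1. -/
theorem abs_mul_inv_le_one_of_abs_le {K : Type*} [Field K] [LinearOrder K] [IsStrictOrderedRing K]
    {a b : K} (h : |a| ≤ b) : |a * b⁻¹| ≤ 1 := by
  have hb : 0 ≤ b := (abs_nonneg a).trans h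
  rw [abs_mul, abs_inv, abs_of_nonneg hb]
  exact mul_inv_le_one_of_le₀ h hb

/-- Numerator and denominator differ by `γ₂θ ≥ 0`, and their sum
`2α₂ + (2α_f - 1)γ₂θ` is nonnegative, so the numerator is bounded by the denominator in
absolute value. -/
theorem stmt_1 (θ αf α₂ γ₂ θ₂ : ℝ) (hθ : 0 ≤ θ) (hαf : 1/2 ≤ αf) (hα₂ : αf ≤ α₂)
    (hγ : γ₂ = 1/2 - αf + α₂) (hθ₂ : θ₂ = (α₂ + αf * γ₂ * θ)⁻¹) :
    -1 ≤ (α₂ + (αf - 1) * γ₂ * θ) * θ₂ ∧ (α₂ + (αf - 1) * γ₂ * θ) * θ₂ ≤ 1 := by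
  subst hθ₂
  have hγθ : 0 ≤ γ₂ * θ := mul_nonneg (by rw [hγ]; linarith) hθ
  have hcross : 0 ≤ (2 * αf - 1) * (γ₂ * θ) := mul_nonneg (by linarith) hγθ
  refine abs_le.mp (abs_mul_inv_le_one_of_abs_le (abs_le.mpr ⟨?_, ?_⟩)) <;> linarith
end

section
/- Let α_k ≥ α_f ≥ 1/2 with α_k > 0, γ_k = 1/2 - α_f + α_k > 0, and θ ∈ ℂ with Re(θ) ≥ 0. Then |(α_k + (α_f - 1)γ_k θ) / (α_k + α_f γ_k θ)| ≤ 1. -/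
/-! The numerator and denominator differ by `γ_k θ`, and with `z = γ_k θ`,
`|α_k + α_f z|² - |α_k + (α_f - 1) z|² = 2 α_k Re z + (2 α_f - 1) |z|²`,
which is nonnegative when `α_k ≥ 0`, `α_f ≥ 1/2` and `Re z ≥ 0`. -/

namespace Complex

theorem normSq_ofReal_add_mul_sub_normSq_ofReal_add_sub_one_mul (a f : ℝ) (z : ℂ) :
    normSq (a + f * z) - normSq (a + (f - 1) * z) = 2 * a * z.re + (2 * f - 1) * normSq z := by
  simp only [normSq_apply, add_re, add_im, mul_re, mul_im, sub_re, sub_im, ofReal_re, ofReal_im,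
    one_re, one_im]
  ring

theorem norm_ofReal_add_sub_one_mul_le {a f : ℝ} (ha : 0 ≤ a) (hf : 1 / 2 ≤ f) {z : ℂ}
    (hz : 0 ≤ z.re) : ‖(a : ℂ) + (f - 1) * z‖ ≤ ‖(a : ℂ) + f * z‖ := by
  have hdiff := normSq_ofReal_add_mul_sub_normSq_ofReal_add_sub_one_mul a f z
  have hnonneg : 0 ≤ 2 * a * z.re + (2 * f - 1) * normSq z := by
    have hf' : 0 ≤ 2 * f - 1 := by linarith
    have := normSq_nonneg z
    positivity
  rw [← sq_le_sq₀ (norm_nonneg _) (norm_nonneg _), Complex.sq_norm, Complex.sq_norm]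
  linarith

end Complex

theorem stmt_7_general (αk αf γk : ℝ) (hαf : 1/2 ≤ αf) (hαk0 : 0 < αk)
    (hγk0 : 0 < γk)
    (θ : ℂ) (hθ : 0 ≤ θ.re) :
    ‖(((αk : ℂ) + ((αf : ℂ) - 1) * (γk : ℂ) * θ) /
      ((αk : ℂ) + (αf : ℂ) * (γk : ℂ) * θ))‖ ≤ 1 := by
  have hz : 0 ≤ ((γk : ℂ) * θ).re := by
    rw [Complex.re_ofReal_mul]
    exact mul_nonneg hγk0.le hθ
  have key := Complex.norm_ofReal_add_sub_one_mul_le hαk0.le hαf hz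
  rw [← mul_assoc, ← mul_assoc] at key
  rw [norm_div]
  exact div_le_one_of_le₀ key (norm_nonneg _)

theorem stmt_7 (αk αf γk : ℝ) (hαf : 1/2 ≤ αf) (hαk : αf ≤ αk) (hαk0 : 0 < αk)
    (hγk : γk = 1/2 - αf + αk) (hγk0 : 0 < γk)
    (θ : ℂ) (hθ : 0 ≤ θ.re) :
    ‖(((αk : ℂ) + ((αf : ℂ) - 1) * (γk : ℂ) * θ) /
      ((αk : ℂ) + (αf : ℂ) * (γk : ℂ) * θ))‖ ≤ 1 :=
  stmt_7_general αk αf γk hαf hαk0 hγk0 θ hθ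
end

section
/- Let α_k ≥ α_f ≥ 1/2, γ_k = 1/2 - α_f + α_k. Then as θ → +∞ along the reals, both eigenvalues of G_k(θ) = θ_k·[[α_k+(α_f-1)γ_kθ, α_k-γ_k], [-θ, α_k+α_f(γ_k-1)θ-1]] (with θ_k = (α_k+α_fγ_kθ)⁻¹) converge to (α_f-1)/α_f and (γ_k-1)/γ_k respectively. -/
/-!
Dividing numerator and denominator by `θ` shows that `G_k(θ)` converges, as `θ → ∞`, to the
lower triangular matrix with diagonal `(α_f - 1)/α_f` and `(γ_k - 1)/γ_k`. Trace and determinant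
are continuous, and the two roots of a monic quadratic can be chosen to depend continuously on
its coefficients, so the eigenvalues of `G_k(θ)` converge to the diagonal entries of the limit.
-/

open Polynomial Filter Topology

theorem Matrix.roots_charpoly_fin_two {R : Type*} [CommRing R] [IsDomain R]
    (M : Matrix (Fin 2) (Fin 2) R) {a b : R} (hsum : a + b = M.trace) (hprod : a * b = M.det) :
    M.charpoly.roots = {a, b} := by
  have hfactor : M.charpoly = (X - C a) * (X - C b) := by
    rw [M.charpoly_fin_two, ← hsum, ← hprod, C_add, C_mul]
    ring
  rw [hfactor, roots_mul (mul_ne_zero (X_sub_C_ne_zero a) (X_sub_C_ne_zero b)), roots_X_sub_C,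
    roots_X_sub_C]
  rfl

theorem Matrix.roots_charpoly_map_fin_two {K L : Type*} [CommRing K] [CommRing L] [IsDomain L]
    (f : K →+* L) (M : Matrix (Fin 2) (Fin 2) K) {a b : L} (hsum : a + b = f M.trace)
    (hprod : a * b = f M.det) :
    (M.charpoly.map f).roots = {a, b} := by
  rw [← M.charpoly_map f]
  exact roots_charpoly_fin_two _ (hsum.trans (AddMonoidHom.map_trace f M))
    (hprod.trans (f.map_det M))

theorem Complex.exists_sq_eq_and_tendsto {α : Type*} {l : Filter α} {f : α → ℂ} {c : ℂ}
    (hf : Tendsto f l (𝓝 (c ^ 2))) :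
    ∃ s : α → ℂ, (∀ x, s x ^ 2 = f x) ∧ Tendsto s l (𝓝 c) := by
  obtain ⟨r, hr⟩ : ∃ r : α → ℂ, ∀ x, r x ^ 2 = f x := ⟨fun x => f x ^ (2⁻¹ : ℂ), fun x => by simp⟩
  -- Of the two square roots take the one closer to `c`; then `‖s - c‖² ≤ ‖s² - c²‖ → 0`.
  set s : α → ℂ := fun x => if ‖r x - c‖ ≤ ‖r x + c‖ then r x else -r x
  have hsq : ∀ x, s x ^ 2 = f x := fun x => by
    simp only [s]
    split_ifs <;> simp [hr]
  have hclose : ∀ x, ‖s x - c‖ ^ 2 ≤ ‖s x ^ 2 - c ^ 2‖ := fun x => by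
    have hle : ‖s x - c‖ ≤ ‖s x + c‖ := by
      simp only [s]
      split_ifs with h
      · exact h
      · rw [show -r x - c = -(r x + c) by ring, show -r x + c = -(r x - c) by ring, norm_neg,
          norm_neg]
        exact (not_le.mp h).le
    rw [sq, show s x ^ 2 - c ^ 2 = (s x - c) * (s x + c) by ring, norm_mul]
    exact mul_le_mul_of_nonneg_left hle (norm_nonneg _)
  refine ⟨s, hsq, ?_⟩
  have hsq_sub : Tendsto (fun x => ‖s x ^ 2 - c ^ 2‖) l (𝓝 0) := by
    simp only [hsq]
    exact tendsto_iff_norm_sub_tendsto_zero.mp hf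
  rw [tendsto_iff_norm_sub_tendsto_zero]
  simpa using (squeeze_zero (fun x => by positivity) hclose hsq_sub).sqrt

theorem Complex.exists_vieta_and_tendsto {α : Type*} {l : Filter α} {t d : α → ℂ} {a b : ℂ}
    (ht : Tendsto t l (𝓝 (a + b))) (hd : Tendsto d l (𝓝 (a * b))) :
    ∃ e₁ e₂ : α → ℂ, (∀ x, e₁ x + e₂ x = t x ∧ e₁ x * e₂ x = d x) ∧
      Tendsto e₁ l (𝓝 a) ∧ Tendsto e₂ l (𝓝 b) := by
  have hdisc : Tendsto (fun x => t x ^ 2 - 4 * d x) l (𝓝 ((a - b) ^ 2)) := by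
    convert (ht.pow 2).sub (hd.const_mul 4) using 2
    ring
  obtain ⟨s, hs, hlim⟩ := exists_sq_eq_and_tendsto hdisc
  refine ⟨fun x => (t x + s x) / 2, fun x => (t x - s x) / 2, fun x => ⟨by ring, ?_⟩, ?_, ?_⟩
  · linear_combination -(hs x) / 4
  · convert (ht.add hlim).div_const 2 using 2
    ring
  · convert (ht.sub hlim).div_const 2 using 2
    ring

theorem Matrix.exists_eigenvalues_tendsto_of_tendsto_lowerTriangular {α : Type*} {l : Filter α}
    {M : α → Matrix (Fin 2) (Fin 2) ℝ} {a b c : ℝ} (hM : Tendsto M l (𝓝 !![a, 0; c, b])) :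
    ∃ e₁ e₂ : α → ℂ, (∀ x, ((M x).charpoly.map (algebraMap ℝ ℂ)).roots = {e₁ x, e₂ x}) ∧
      Tendsto e₁ l (𝓝 (a : ℂ)) ∧ Tendsto e₂ l (𝓝 (b : ℂ)) := by
  have htrace : Tendsto (fun x => ((M x).trace : ℂ)) l (𝓝 ((a : ℂ) + b)) := by
    have h : Tendsto (fun x => ((M x).trace : ℂ)) l (𝓝 (!![a, 0; c, b].trace : ℂ)) :=
      ((Complex.continuous_ofReal.comp continuous_id.matrix_trace).tendsto _).comp hM
    simpa [trace_fin_two] using h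
  have hdet : Tendsto (fun x => ((M x).det : ℂ)) l (𝓝 ((a : ℂ) * b)) := by
    have h : Tendsto (fun x => ((M x).det : ℂ)) l (𝓝 (!![a, 0; c, b].det : ℂ)) :=
      ((Complex.continuous_ofReal.comp continuous_id.matrix_det).tendsto _).comp hM
    simpa [det_fin_two] using h
  obtain ⟨e₁, e₂, hvieta, he₁, he₂⟩ := Complex.exists_vieta_and_tendsto htrace hdet
  exact ⟨e₁, e₂, fun x => roots_charpoly_map_fin_two _ _ (hvieta x).1 (hvieta x).2, he₁, he₂⟩

section GeneralizedAlpha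

variable (αk αf γk : ℝ)

noncomputable def amplificationBlock (θ : ℝ) : Matrix (Fin 2) (Fin 2) ℝ :=
  (αk + αf * γk * θ)⁻¹ •
    Matrix.of ![![αk + (αf - 1) * γk * θ, αk - γk], ![-θ, αk + αf * (γk - 1) * θ - 1]]

theorem amplificationBlock_eq_smul {θ : ℝ} (hθ : θ ≠ 0) :
    amplificationBlock αk αf γk θ = (αk * θ⁻¹ + αf * γk)⁻¹ •
      (!![(αf - 1) * γk, 0; -1, αf * (γk - 1)] + θ⁻¹ • !![αk, αk - γk; 0, αk - 1]) := by
  rw [amplificationBlock, show αk + αf * γk * θ = θ * (αk * θ⁻¹ + αf * γk) by field_simp,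
    mul_inv, mul_comm, mul_smul]
  congr 1
  ext i j
  fin_cases i <;> fin_cases j <;> simp <;> field_simp <;> ring

variable {αf γk}

theorem tendsto_amplificationBlock (hαf : αf ≠ 0) (hγk : γk ≠ 0) :
    Tendsto (amplificationBlock αk αf γk) atTop
      (𝓝 !![(αf - 1) / αf, 0; -(αf * γk)⁻¹, (γk - 1) / γk]) := by
  have hscalar : Tendsto (fun θ : ℝ => (αk * θ⁻¹ + αf * γk)⁻¹) atTop (𝓝 (αf * γk)⁻¹) := by
    simpa using ((tendsto_inv_atTop_zero.const_mul αk).add_const (αf * γk)).inv₀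
      (by simpa using mul_ne_zero hαf hγk)
  have hmatrix : Tendsto (fun θ : ℝ => !![(αf - 1) * γk, 0; -1, αf * (γk - 1)] +
      θ⁻¹ • !![αk, αk - γk; 0, αk - 1]) atTop (𝓝 !![(αf - 1) * γk, 0; -1, αf * (γk - 1)]) := by
    have h := (tendsto_const_nhds (x := !![(αf - 1) * γk, 0; -1, αf * (γk - 1)])).add
      ((tendsto_inv_atTop_zero (𝕜 := ℝ)).smul_const !![αk, αk - γk; 0, αk - 1])
    rwa [zero_smul, add_zero] at h
  have hlimit : (αf * γk)⁻¹ • !![(αf - 1) * γk, 0; -1, αf * (γk - 1)] =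
      !![(αf - 1) / αf, 0; -(αf * γk)⁻¹, (γk - 1) / γk] := by
    ext i j
    fin_cases i <;> fin_cases j <;> simp <;> field_simp
  rw [← hlimit]
  refine (hscalar.smul hmatrix).congr' ?_
  filter_upwards [eventually_gt_atTop 0] with θ hθ
  exact (amplificationBlock_eq_smul αk αf γk hθ.ne').symm

end GeneralizedAlpha

theorem stmt_13 (αk αf γk : ℝ) (hαf : 1/2 ≤ αf) (hαk : αf ≤ αk)
    (hγk : γk = 1/2 - αf + αk)
    (Gk : ℝ → Matrix (Fin 2) (Fin 2) ℝ)
    (hGk : ∀ θ : ℝ, Gk θ = (αk + αf * γk * θ)⁻¹ •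
      Matrix.of ![![αk + (αf - 1) * γk * θ, αk - γk],
                  ![-θ, αk + αf * (γk - 1) * θ - 1]]) :
    ∃ e₁ e₂ : ℝ → ℂ,
      (∀ θ : ℝ, 0 < θ →
        (((Gk θ).charpoly.map (algebraMap ℝ ℂ)).roots = {e₁ θ, e₂ θ})) ∧
      Filter.Tendsto e₁ Filter.atTop (nhds (((αf - 1) / αf : ℝ) : ℂ)) ∧
      Filter.Tendsto e₂ Filter.atTop (nhds (((γk - 1) / γk : ℝ) : ℂ)) := by
  have hαf0 : αf ≠ 0 := by positivity
  have hγk0 : γk ≠ 0 := by rw [hγk]; linarith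
  have hGk_eq : Gk = amplificationBlock αk αf γk := funext hGk
  obtain ⟨e₁, e₂, hroots, he₁, he₂⟩ := Matrix.exists_eigenvalues_tendsto_of_tendsto_lowerTriangular
    (hGk_eq ▸ tendsto_amplificationBlock αk hαf0 hγk0)
  exact ⟨e₁, e₂, fun θ _ => hroots θ, he₁, he₂⟩
end
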